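/- arXiv:math/0010204 — 2 statements merged into one kernel-verified Lean document; each statement's English description precedes it below -/
import Mathlib

section
/- Let V₀ be a free ℤ[r]-module with basis {x_β : β ∈ Φ⁺}, and for each k define τ_k by τ_k(x_β) = 0 if (α_k,β) = 2, τ_k(x_β) = r·x_{β−α_k} if (α_k,β) = 1, τ_k(x_β) = x_β if (α_k,β) = 0, and τ_k(x_β) = (1−r²)x_β + r·x_{β+α_k} if (α_k,β) = −1. Then for nonadjacent k, l (i.e., (α_k,α_l) = 0), τ_k τ_l = τ_l τ_k. -/
/-! The coefficients of `τ_k x_β` along the `α_k`-string through `β` depend only on `(α_k, β)`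
and on the `k`-th coordinate of `β` (for a positive root, `(α_k, β) ∈ [-1, 2]` and whether
`β ± α_k` is again positive is decided by these two numbers). If `(α_k, α_l) = 0`, neither
quantity changes when `β` moves by a multiple of `α_l`. So, transported along the injection of
`Φ⁺` into the root lattice, `τ_k` and `τ_l` become operators that spread each lattice point along
two orthogonal strings, each with weights constant along the other string, and such operators
commute. -/

/-- The fundamental root `α_i`, written in coordinates with respect to the basis of
fundamental roots. -/
def esingle {n : ℕ} (i : Fin n) : Fin n → ℤ := Pi.single i 1

/-- A finite crystallographic simply-laced root system (type `A`, `D` or `E`),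
given by the Gram matrix `C` of the fundamental roots `α_1, …, α_n` (all of squared
length 2):  `C i j = (α_i, α_j)`, which is `2` on the diagonal and `0` or `-1` off
the diagonal, and is positive definite.  Roots are coordinatized in the root
lattice `ℤⁿ`; the inner product is `ip`, and the positive roots are exactly the
lattice vectors of squared length `2` with nonnegative coordinates. -/
structure ADE (n : ℕ) where
  C : Matrix (Fin n) (Fin n) ℤ
  symm : ∀ i j, C i j = C j i
  diag : ∀ i, C i i = 2
  offdiag : ∀ i j, i ≠ j → C i j = 0 ∨ C i j = -1
  posdef : ∀ v : Fin n → ℤ, v ≠ 0 → 0 < ∑ i, ∑ j, v i * C i j * v j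

namespace ADE

variable {n : ℕ}

/-- The inner product `( , )` on the root lattice. -/
def ip (X : ADE n) (v w : Fin n → ℤ) : ℤ := ∑ i, ∑ j, v i * X.C i j * w j

/-- The set `Φ⁺` of positive roots: the lattice vectors of squared length `2`
all of whose coordinates (with respect to the fundamental roots) are nonnegative. -/
def Pos (X : ADE n) : Set (Fin n → ℤ) :=
  {β | β ≠ 0 ∧ (∀ j, 0 ≤ β j) ∧ X.ip β β = 2}

/-- The height `ht(β)`: the sum of the coefficients of `β` with respect to the
fundamental roots. -/
def htZ (β : Fin n → ℤ) : ℤ := ∑ j, β j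

end ADE

namespace ADE

variable {n : ℕ}

/-- The index type of the basis `{x_β : β ∈ Φ⁺}`. -/
abbrev PosIdx (X : ADE n) := {β : Fin n → ℤ // β ∈ X.Pos}

/-- The free module with basis `{x_β : β ∈ Φ⁺}` over a coefficient ring `A`. -/
abbrev LKMod (X : ADE n) (A : Type) [CommRing A] := ADE.PosIdx X →₀ A

/-- The basis vector `x_β`. -/
noncomputable def xv (X : ADE n) (A : Type) [CommRing A] (b : ADE.PosIdx X) :
    ADE.LKMod X A := Finsupp.single b 1

open scoped Classical in
/-- The linear map `τ_k` over a coefficient ring `A` with distinguished element `r`: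
`τ_k x_β = 0`, `r x_{β-α_k}`, `x_β`, or `(1 - r²) x_β + r x_{β+α_k}` according as
`(α_k, β) = 2, 1, 0, -1`. -/
noncomputable def tau (X : ADE n) (A : Type) [CommRing A] (r : A) (k : Fin n) :
    ADE.LKMod X A →ₗ[A] ADE.LKMod X A :=
  Finsupp.linearCombination A fun b : ADE.PosIdx X =>
    if X.ip (esingle k) b.1 = 2 then 0
    else if X.ip (esingle k) b.1 = 1 then
      (if h : b.1 - esingle k ∈ X.Pos then r • Finsupp.single ⟨b.1 - esingle k, h⟩ 1 else 0)
    else if X.ip (esingle k) b.1 = 0 then Finsupp.single b 1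
    else (1 - r ^ 2) • Finsupp.single b 1 +
      (if h : b.1 + esingle k ∈ X.Pos then r • Finsupp.single ⟨b.1 + esingle k, h⟩ 1 else 0)

end ADE

namespace Finsupp

variable {V A : Type*} [AddCommGroup V] [CommSemiring A]

noncomputable def stringOperator (u : V) (g : V → ℤ →₀ A) : (V →₀ A) →ₗ[A] (V →₀ A) :=
  linearCombination A fun v => (g v).sum fun m c => single (v + m • u) c

lemma stringOperator_single (u : V) (g : V → ℤ →₀ A) (v : V) (c : A) :
    stringOperator u g (single v c) = (g v).sum fun m c' => single (v + m • u) (c * c') := by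
  simp only [stringOperator, linearCombination_single, smul_sum, smul_single, smul_eq_mul]

/-- Both composites spread `v` over the grid `v + ℤ u + ℤ w` with the product weights. -/
lemma stringOperator_comm {u w : V} {g h : V → ℤ →₀ A}
    (hg : ∀ v (m : ℤ), g (v + m • w) = g v) (hh : ∀ v (m : ℤ), h (v + m • u) = h v) :
    stringOperator u g ∘ₗ stringOperator w h = stringOperator w h ∘ₗ stringOperator u g := by
  refine lhom_ext fun v c => ?_
  simp only [LinearMap.comp_apply, stringOperator_single, map_finsuppSum, hg, hh]
  rw [sum_comm]
  refine sum_congr fun m _ => sum_congr fun m' _ => ?_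
  rw [add_right_comm, mul_right_comm]

end Finsupp

namespace ADE

variable {n : ℕ} (X : ADE n)

lemma ip_eq_toLinearMap₂' (v w : Fin n → ℤ) : X.ip v w = Matrix.toLinearMap₂' ℤ X.C v w := by
  simp [ip, Matrix.toLinearMap₂'_apply, mul_comm, mul_left_comm]

lemma ip_comm (v w : Fin n → ℤ) : X.ip v w = X.ip w v := by
  rw [ip, Finset.sum_comm]
  refine Finset.sum_congr rfl fun i _ => Finset.sum_congr rfl fun j _ => ?_
  rw [X.symm j i]
  ring

lemma ip_add_left (u v w : Fin n → ℤ) : X.ip (u + v) w = X.ip u w + X.ip v w := by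
  simp only [ip_eq_toLinearMap₂', map_add, LinearMap.add_apply]

lemma ip_sub_left (u v w : Fin n → ℤ) : X.ip (u - v) w = X.ip u w - X.ip v w := by
  simp only [ip_eq_toLinearMap₂', map_sub, LinearMap.sub_apply]

lemma ip_add_right (u v w : Fin n → ℤ) : X.ip u (v + w) = X.ip u v + X.ip u w := by
  simp only [ip_eq_toLinearMap₂', map_add]

lemma ip_sub_right (u v w : Fin n → ℤ) : X.ip u (v - w) = X.ip u v - X.ip u w := by
  simp only [ip_eq_toLinearMap₂', map_sub]

lemma ip_smul_right (u w : Fin n → ℤ) (m : ℤ) : X.ip u (m • w) = m * X.ip u w := by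
  simp only [ip_eq_toLinearMap₂', map_zsmul, smul_eq_mul]

lemma ip_add_add_self (v w : Fin n → ℤ) :
    X.ip (v + w) (v + w) = X.ip v v + 2 * X.ip w v + X.ip w w := by
  rw [ip_add_left, ip_add_right, ip_add_right, X.ip_comm v w]
  ring

lemma ip_sub_sub_self (v w : Fin n → ℤ) :
    X.ip (v - w) (v - w) = X.ip v v - 2 * X.ip w v + X.ip w w := by
  rw [ip_sub_left, ip_sub_right, ip_sub_right, X.ip_comm v w]
  ring

lemma ip_esingle_esingle (i j : Fin n) : X.ip (esingle i) (esingle j) = X.C i j := by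
  simp [ip, esingle, Pi.single_apply]

lemma eq_zero_of_ip_self_le_zero {v : Fin n → ℤ} (hv : X.ip v v ≤ 0) : v = 0 := by
  by_contra hne
  exact hv.not_gt (X.posdef v hne)

lemma ip_self_nonneg (v : Fin n → ℤ) : 0 ≤ X.ip v v := by
  by_cases hv : v = 0
  · simp [hv, ip]
  · exact (X.posdef v hv).le

lemma mem_Pos_of_nonneg {β : Fin n → ℤ} (hnn : ∀ j, 0 ≤ β j) (hβ : X.ip β β = 2) :
    β ∈ X.Pos := by
  refine ⟨?_, hnn, hβ⟩
  rintro rfl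
  simp [ip] at hβ

variable {X}

lemma ip_esingle_mem_Icc {β : Fin n → ℤ} (hβ : β ∈ X.Pos) (k : Fin n) :
    X.ip (esingle k) β ∈ Set.Icc (-1) 2 := by
  obtain ⟨-, hnn, hnorm⟩ := hβ
  constructor
  · by_contra! hlt
    have hsum : β + esingle k = 0 := X.eq_zero_of_ip_self_le_zero (by
      rw [ip_add_add_self, hnorm, ip_esingle_esingle, X.diag]
      omega)
    have hk := congrFun hsum k
    simp only [Pi.add_apply, esingle, Pi.single_eq_same, Pi.zero_apply] at hk
    linarith [hnn k]
  · have := X.ip_self_nonneg (β - esingle k)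
    rw [ip_sub_sub_self, hnorm, ip_esingle_esingle, X.diag] at this
    omega

lemma add_esingle_mem_Pos {β : Fin n → ℤ} (hβ : β ∈ X.Pos) {k : Fin n}
    (hk : X.ip (esingle k) β = -1) : β + esingle k ∈ X.Pos := by
  obtain ⟨-, hnn, hnorm⟩ := hβ
  refine X.mem_Pos_of_nonneg (fun j => ?_) ?_
  · have := hnn j
    simp only [Pi.add_apply, esingle, Pi.single_apply]
    split <;> omega
  · rw [ip_add_add_self, hnorm, ip_esingle_esingle, X.diag, hk]
    norm_num

lemma sub_esingle_mem_Pos_iff {β : Fin n → ℤ} (hβ : β ∈ X.Pos) {k : Fin n}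
    (hk : X.ip (esingle k) β = 1) : β - esingle k ∈ X.Pos ↔ 1 ≤ β k := by
  obtain ⟨-, hnn, hnorm⟩ := hβ
  constructor
  · rintro ⟨-, hnn', -⟩
    simpa [esingle] using hnn' k
  · intro hβk
    refine X.mem_Pos_of_nonneg (fun j => ?_) ?_
    · have := hnn j
      simp only [Pi.sub_apply, esingle, Pi.single_apply]
      split
      · subst j; omega
      · omega
    · rw [ip_sub_sub_self, hnorm, ip_esingle_esingle, X.diag, hk]
      norm_num

variable {A : Type} [CommRing A] (r : A)

/-- The coefficients of `τ_k x_β` along the `α_k`-string through `β`, as a function of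
`s = (α_k, β)` and `c = β_k`: `x_{β + m α_k}` gets coefficient `tauProfile r s c m`. -/
noncomputable def tauProfile (s c : ℤ) : ℤ →₀ A :=
  if s = 2 then 0
  else if s = 1 then (if 1 ≤ c then Finsupp.single (-1) r else 0)
  else if s = 0 then Finsupp.single 0 1
  else Finsupp.single 0 (1 - r ^ 2) + Finsupp.single 1 r

variable (X) in
noncomputable def tauLattice (k : Fin n) : ((Fin n → ℤ) →₀ A) →ₗ[A] ((Fin n → ℤ) →₀ A) :=
  Finsupp.stringOperator (esingle k) fun v => tauProfile r (X.ip (esingle k) v) (v k)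

variable (X) in
lemma lmapDomain_val_comp_tau (k : Fin n) :
    Finsupp.lmapDomain A A Subtype.val ∘ₗ X.tau A r k =
      X.tauLattice r k ∘ₗ Finsupp.lmapDomain A A Subtype.val := by
  classical
  refine Finsupp.lhom_ext fun b c => ?_
  obtain ⟨hlow, hup⟩ := ip_esingle_mem_Icc b.2 k
  simp only [LinearMap.comp_apply, tau, Finsupp.linearCombination_single,
    Finsupp.lmapDomain_apply, Finsupp.mapDomain_single, tauLattice, Finsupp.stringOperator_single,
    tauProfile]
  obtain hs | hs | hs | hs : X.ip (esingle k) b.1 = 2 ∨ X.ip (esingle k) b.1 = 1 ∨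
      X.ip (esingle k) b.1 = 0 ∨ X.ip (esingle k) b.1 = -1 := by omega
  · rw [if_pos hs, if_pos hs]
    simp only [smul_zero, Finsupp.mapDomain_zero, Finsupp.sum_zero_index]
  · rw [if_neg (by omega), if_pos hs, if_neg (by omega), if_pos hs]
    by_cases hk : 1 ≤ b.1 k
    · rw [dif_pos ((sub_esingle_mem_Pos_iff b.2 hs).mpr hk), if_pos hk]
      simp only [Finsupp.smul_single, smul_eq_mul, mul_one, Finsupp.mapDomain_single,
        Finsupp.sum_single_index, mul_zero, neg_smul, one_smul, ← sub_eq_add_neg, mul_comm,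
        Finsupp.single_zero]
    · rw [dif_neg (mt (sub_esingle_mem_Pos_iff b.2 hs).mp hk), if_neg hk]
      simp only [smul_zero, Finsupp.mapDomain_zero, Finsupp.sum_zero_index]
  · rw [if_neg (by omega), if_neg (by omega), if_pos hs, if_neg (by omega), if_neg (by omega),
      if_pos hs]
    simp only [Finsupp.smul_single, smul_eq_mul, mul_one, Finsupp.mapDomain_single,
      Finsupp.sum_single_index, mul_zero, zero_smul, add_zero, Finsupp.single_zero]
  · rw [if_neg (by omega), if_neg (by omega), if_neg (by omega),
      dif_pos (add_esingle_mem_Pos b.2 hs), if_neg (by omega), if_neg (by omega), if_neg (by omega)]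
    simp only [smul_add, Finsupp.smul_single, smul_eq_mul, mul_one, Finsupp.mapDomain_add,
      Finsupp.mapDomain_single, Finsupp.sum_add_index', Finsupp.sum_single_index, zero_smul,
      one_smul, add_zero, one_mul, mul_zero, Finsupp.single_zero, Finsupp.single_add, mul_add,
      mul_comm, implies_true]

lemma ne_of_ip_esingle_eq_zero {k l : Fin n} (h : X.ip (esingle k) (esingle l) = 0) : k ≠ l := by
  rintro rfl
  rw [ip_esingle_esingle, X.diag] at h
  omega

lemma tauProfile_add_smul_esingle {k l : Fin n} (h : X.ip (esingle k) (esingle l) = 0)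
    (v : Fin n → ℤ) (m : ℤ) :
    tauProfile r (X.ip (esingle k) (v + m • esingle l)) ((v + m • esingle l) k) =
      tauProfile r (X.ip (esingle k) v) (v k) := by
  have hlk : esingle l k = 0 := Pi.single_eq_of_ne (ne_of_ip_esingle_eq_zero h) 1
  rw [ip_add_right, ip_smul_right, h, mul_zero, add_zero, Pi.add_apply, Pi.smul_apply, hlk,
    smul_zero, add_zero]

lemma tauLattice_comm {k l : Fin n} (h : X.ip (esingle k) (esingle l) = 0) :
    X.tauLattice r k ∘ₗ X.tauLattice r l = X.tauLattice r l ∘ₗ X.tauLattice r k :=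
  Finsupp.stringOperator_comm (tauProfile_add_smul_esingle r h)
    (tauProfile_add_smul_esingle r (by rwa [ip_comm]))

end ADE

/-- For nonadjacent `k, l` (i.e. `(α_k, α_l) = 0`), the maps `τ_k, τ_l` on the free
`ℤ[r]`-module `V₀` with basis `{x_β : β ∈ Φ⁺}` commute: `τ_k τ_l = τ_l τ_k`. -/
theorem tau_comm {n : ℕ} (X : ADE n) (k l : Fin n)
    (h : X.ip (esingle k) (esingle l) = 0) :
    (ADE.tau X (Polynomial ℤ) Polynomial.X k) ∘ₗ (ADE.tau X (Polynomial ℤ) Polynomial.X l) =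
      (ADE.tau X (Polynomial ℤ) Polynomial.X l) ∘ₗ (ADE.tau X (Polynomial ℤ) Polynomial.X k) := by
  set ι := Finsupp.lmapDomain (Polynomial ℤ) (Polynomial ℤ) (Subtype.val : X.PosIdx → Fin n → ℤ)
  have intertwine := X.lmapDomain_val_comp_tau (Polynomial.X : Polynomial ℤ)
  have comp_tau_tau (a b : Fin n) : ι ∘ₗ X.tau _ Polynomial.X a ∘ₗ X.tau _ Polynomial.X b =
      X.tauLattice Polynomial.X a ∘ₗ X.tauLattice Polynomial.X b ∘ₗ ι := by
    rw [← LinearMap.comp_assoc, intertwine, LinearMap.comp_assoc, intertwine]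
  rw [← LinearMap.cancel_left (f := ι) (Finsupp.mapDomain_injective Subtype.val_injective),
    comp_tau_tau, comp_tau_tau, ← LinearMap.comp_assoc, ADE.tauLattice_comm _ h,
    LinearMap.comp_assoc]
end

section
/- Let a monoid B⁺ with length function l (additive, l(x)=0 iff x=1, each x a product of l(x) generators from a set whose images under L lie in Ω) act on a set U with each element acting injectively. Suppose there are nonempty pairwise-disjoint subsets C_x ⊆ U indexed by a subset Ω ⊆ B⁺ containing 1, a map L: B⁺ → Ω with L(x) = 1 iff x = 1, L(x) a left divisor of x with l(L(x)) ≥ 1 for x ≠ 1, and x·C_y ⊆ C_{L(xy)} for all x ∈ B⁺, y ∈ Ω. Then the action of B⁺ on U is faithful. -/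
/-- Krammer's abstract faithfulness criterion.  Let `B⁺` be a monoid with an
additive length function `l` (with `l(x) = 0` iff `x = 1`), acting on a set `U`
with every element acting injectively.  Suppose there are nonempty pairwise
disjoint subsets `C_x ⊆ U` indexed by a subset `Ω ⊆ B⁺` containing `1`, and a map
`L : B⁺ → Ω` with `L(x) = 1` iff `x = 1`, `L(x)` a left divisor of `x`,
`l(L(x)) ≥ 1` for `x ≠ 1`, and `x · C_y ⊆ C_{L(xy)}` for all `x ∈ B⁺`, `y ∈ Ω`.
Then the action of `B⁺` on `U` is faithful. -/
theorem krammer_faithfulness {B : Type*} [Monoid B] {U : Type*} [MulAction B U]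
    (l : B → ℕ)
    (hladd : ∀ x y : B, l (x * y) = l x + l y)
    (hl0 : ∀ x : B, l x = 0 ↔ x = 1)
    (hinj : ∀ x : B, Function.Injective fun u : U => x • u)
    (Ω : Set B) (hΩone : (1 : B) ∈ Ω)
    (C : B → Set U)
    (hCne : ∀ x ∈ Ω, (C x).Nonempty)
    (hCdisj : ∀ x ∈ Ω, ∀ y ∈ Ω, x ≠ y → Disjoint (C x) (C y))
    (L : B → B) (hLmem : ∀ x : B, L x ∈ Ω)
    (hLone : ∀ x : B, L x = 1 ↔ x = 1)
    (hLdvd : ∀ x : B, ∃ x' : B, x = L x * x')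
    (hLlen : ∀ x : B, x ≠ 1 → 1 ≤ l (L x))
    (hact : ∀ x : B, ∀ y ∈ Ω, (fun u : U => x • u) '' C y ⊆ C (L (x * y))) :
    ∀ x y : B, (∀ u : U, x • u = y • u) → x = y := by
  have key : ∀ n : ℕ, ∀ x y : B, l x + l y ≤ n → (∀ u : U, x • u = y • u) → x = y := by
    intro n
    induction n with
    | zero =>
      intro x y hn _
      have hx : l x = 0 := by omega
      have hy : l y = 0 := by omega
      rw [(hl0 x).1 hx, (hl0 y).1 hy]
    | succ n ih =>
      intro x y hn h
      obtain ⟨u, hu⟩ := hCne 1 hΩone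
      have hxu : x • u ∈ C (L x) := by
        have := hact x 1 hΩone ⟨u, hu, rfl⟩
        rwa [mul_one] at this
      have hyu : y • u ∈ C (L y) := by
        have := hact y 1 hΩone ⟨u, hu, rfl⟩
        rwa [mul_one] at this
      have hLeq : L x = L y := by
        by_contra hne
        exact (hCdisj _ (hLmem x) _ (hLmem y) hne).le_bot ⟨hxu, h u ▸ hyu⟩
      by_cases hx1 : x = 1
      · have : L y = 1 := by rw [← hLeq, (hLone x).2 hx1]
        rw [hx1, (hLone y).1 this]
      by_cases hy1 : y = 1
      · have : L x = 1 := by rw [hLeq, (hLone y).2 hy1]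
        rw [hy1, (hLone x).1 this]
      obtain ⟨x', hx'⟩ := hLdvd x
      obtain ⟨y', hy'⟩ := hLdvd y
      have heq : ∀ u : U, x' • u = y' • u := by
        intro v
        apply hinj (L x)
        have := h v
        rw [hx', hy', ← hLeq, mul_smul, mul_smul] at this
        exact this
      have hlx : l x = l (L x) + l x' := by conv_lhs => rw [hx', hladd]
      have hly : l y = l (L y) + l y' := by conv_lhs => rw [hy', hladd]
      have h1 : 1 ≤ l (L x) := hLlen x hx1
      have h2 : 1 ≤ l (L y) := hLlen y hy1
      have : x' = y' := ih x' y' (by omega) heq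
      rw [hx', hy', hLeq, this]
  intro x y h
  exact key (l x + l y) x y le_rfl h
end
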